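/- arXiv:2407.05127 — 7 statements merged into one kernel-verified Lean document; each statement's English description precedes it below -/
import Mathlib

section
/- Let S be a finite set, let k be a positive integer with 2 ≤ k ≤ |S|, and let f : 2^S → ℝ be a k-distant submodular function with f(∅) = 0. Then for every X ⊆ S, one has f(S) − ∑_{T ⊆ S, |T| ≤ k} |f(T)| ≤ f(X) ≤ ∑_{T ⊆ S, |T| ≤ k} |f(T)|. -/
open scoped symmDiff

/-- A set function `f` on subsets of a finite type is `k`-distant submodular if the
submodular inequality holds for every pair whose symmetric difference has size at least `k`. -/
def DistantSubmodular {α : Type*} [DecidableEq α] (k : ℕ) (f : Finset α → ℝ) : Prop :=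
  ∀ X Y : Finset α, k ≤ (X ∆ Y).card → f (X ∪ Y) + f (X ∩ Y) ≤ f X + f Y

private lemma aux_upper {α : Type*} [DecidableEq α] (k : ℕ) (hk1 : 1 ≤ k)
    (f : Finset α → ℝ) (hf : DistantSubmodular k f) (hf0 : f ∅ = 0)
    (X : Finset α) :
    f X ≤ ∑ T ∈ X.powerset.filter (fun T => T.Nonempty ∧ T.card ≤ k), |f T| := by
  induction X using Finset.strongInduction with
  | _ X ih =>
    by_cases hX : X = ∅
    · subst hX
      have : (Finset.powerset (∅ : Finset α)).filter
          (fun T => T.Nonempty ∧ T.card ≤ k) = ∅ := by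
        ext T
        simp [Finset.Nonempty]
        intro h; obtain ⟨h1, ⟨x, hx⟩, _⟩ := (Finset.mem_filter (p := fun T : Finset α => T.Nonempty ∧ T.card ≤ k)).1 h
        rw [Finset.mem_singleton] at h1; subst h1; simp at hx
      rw [this]
      simp [hf0]
    · by_cases hcard : X.card ≤ k
      · calc f X ≤ |f X| := le_abs_self _
        _ ≤ _ := by
            apply Finset.single_le_sum (f := fun T => |f T|)
            · intro i _; exact abs_nonneg _
            · simp [Finset.mem_filter, Finset.mem_powerset, hcard,
                Finset.nonempty_iff_ne_empty, hX]
      · push_neg at hcard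
        obtain ⟨Y, hYX, hYcard⟩ := Finset.exists_subset_card_eq (s := X) (n := k) hcard.le
        set Z := X \ Y with hZ
        have hYne : Y ≠ ∅ := by
          intro h; rw [h] at hYcard; simp at hYcard; omega
        have hZX : Z ⊂ X := by
          apply Finset.sdiff_ssubset hYX (Finset.nonempty_iff_ne_empty.2 hYne)
        have hdisj : Disjoint Y Z := Finset.disjoint_sdiff
        have hunion : Y ∪ Z = X := Finset.union_sdiff_of_subset hYX
        have hsymm : Y ∆ Z = X := by
          ext a
          simp only [Finset.mem_symmDiff, hZ, Finset.mem_sdiff]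
          constructor
          · rintro (⟨h, _⟩ | ⟨⟨h, _⟩, _⟩) <;> [exact hYX h; exact h]
          · intro h
            by_cases hY : a ∈ Y
            · exact Or.inl ⟨hY, fun hc => hc.2 hY⟩
            · exact Or.inr ⟨⟨h, hY⟩, hY⟩
        have hsub := hf Y Z (by rw [hsymm]; exact hcard.le)
        rw [hunion, Finset.disjoint_iff_inter_eq_empty.1 hdisj, hf0] at hsub
        have h1 : f X ≤ f Y + f Z := by linarith
        have h2 := ih Z hZX
        have hYabs : f Y ≤ |f Y| := le_abs_self _
        -- now combine: |f Y| + sum over Z ≤ sum over X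
        have hYmem : Y ∉ Z.powerset.filter (fun T => T.Nonempty ∧ T.card ≤ k) := by
          simp only [Finset.mem_filter, Finset.mem_powerset, not_and]
          intro hYZ
          exfalso
          have := Finset.disjoint_self_iff_empty Y |>.1 ?_
          · exact hYne this
          · exact (hdisj.mono_right hYZ).symm.mono_right le_rfl |>.symm
        have hsubset : insert Y (Z.powerset.filter (fun T => T.Nonempty ∧ T.card ≤ k))
            ⊆ X.powerset.filter (fun T => T.Nonempty ∧ T.card ≤ k) := by
          intro T hT
          rcases Finset.mem_insert.1 hT with rfl | hT
          · simp only [Finset.mem_filter, Finset.mem_powerset]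
            exact ⟨hYX, Finset.nonempty_iff_ne_empty.2 hYne, hYcard.le⟩
          · simp only [Finset.mem_filter, Finset.mem_powerset] at hT ⊢
            exact ⟨hT.1.trans (Finset.sdiff_subset), hT.2⟩
        have h3 : |f Y| + ∑ T ∈ Z.powerset.filter (fun T => T.Nonempty ∧ T.card ≤ k), |f T|
            ≤ ∑ T ∈ X.powerset.filter (fun T => T.Nonempty ∧ T.card ≤ k), |f T| := by
          have heq := Finset.sum_insert (f := fun T => |f T|) hYmem
          rw [← heq]
          exact Finset.sum_le_sum_of_subset_of_nonneg hsubset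
            (fun i _ _ => abs_nonneg _)
        linarith

theorem stmt_0 {α : Type*} [Fintype α] [DecidableEq α] (k : ℕ)
    (hk2 : 2 ≤ k) (hkn : k ≤ Fintype.card α)
    (f : Finset α → ℝ) (hf : DistantSubmodular k f) (hf0 : f ∅ = 0)
    (X : Finset α) :
    f Finset.univ - ∑ T ∈ Finset.univ.filter (fun T : Finset α => T.card ≤ k), |f T| ≤ f X ∧
      f X ≤ ∑ T ∈ Finset.univ.filter (fun T : Finset α => T.card ≤ k), |f T| := by
  have hk1 : 1 ≤ k := by omega
  have upper : ∀ W : Finset α,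
      f W ≤ ∑ T ∈ Finset.univ.filter (fun T : Finset α => T.card ≤ k), |f T| := by
    intro W
    refine (aux_upper k hk1 f hf hf0 W).trans ?_
    apply Finset.sum_le_sum_of_subset_of_nonneg
    · intro T hT
      simp only [Finset.mem_filter, Finset.mem_powerset] at hT ⊢
      exact ⟨Finset.mem_univ _, hT.2.2⟩
    · intro i _ _; exact abs_nonneg _
  refine ⟨?_, upper X⟩
  have hsymm : X ∆ Xᶜ = (Finset.univ : Finset α) := by
    ext a
    simp [Finset.mem_symmDiff]
  have hsub := hf X Xᶜ (by rw [hsymm, Finset.card_univ]; exact hkn)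
  have hun : X ∪ Xᶜ = Finset.univ := Finset.union_compl X
  have hin : X ∩ Xᶜ = ∅ := Finset.inter_compl X
  rw [hun, hin, hf0] at hsub
  have := upper Xᶜ
  linarith
end

section
/- Let K_n = (V, E) be the complete graph on n vertices, k a positive integer, and w : E → ℝ a weight function such that ∑_{e ∈ X} w(e) ≥ 0 for every vertex v ∈ V and every X ⊆ δ(v) with |X| ≥ k, where δ(v) denotes the set of edges incident to v. Then the cut function c : 2^V → ℝ defined by c(T) = ∑_{e = (u,v) ∈ E, u ∈ T, v ∉ T} w(e) is (2k−1)-distant submodular. -/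
open scoped symmDiff

/-- The cut function of the complete graph on vertex set `V` with symmetric edge weights `w`:
`c T` is the total weight of edges with exactly one endpoint in `T`. -/
def cutFun {V : Type*} [Fintype V] [DecidableEq V] (w : V → V → ℝ) (T : Finset V) : ℝ :=
  ∑ u ∈ T, ∑ v ∈ Tᶜ, w u v

/-!
The submodularity defect of the cut function is exactly the weight crossing between
`A = X \ Y` and `B = Y \ X`, counted in both directions:
`c X + c Y - c (X ∪ Y) - c (X ∩ Y) = w(A, B) + w(B, A)`.
If `|X ∆ Y| ≥ 2k - 1`, one of `A`, `B` has at least `k` elements, say `A`; then for every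
`u ∈ B` the edges from `u` to `A` form a set of at least `k` edges at `u`, so their weight is
nonnegative. Summing over `u ∈ B` gives `w(B, A) ≥ 0`, and by symmetry `w(A, B) = w(B, A)`.
-/

section

variable {V : Type*} [Fintype V] [DecidableEq V]

theorem Finset.sum_sum_ite_mem_and_mem {M : Type*} [AddCommMonoid M] (P Q : Finset V)
    (f : V → V → M) :
    ∑ u, ∑ v, (if u ∈ P ∧ v ∈ Q then f u v else 0) = ∑ u ∈ P, ∑ v ∈ Q, f u v := by
  simp [ite_and, Finset.sum_ite_mem]

theorem cutFun_eq_sum_ite (w : V → V → ℝ) (T : Finset V) :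
    cutFun w T = ∑ u, ∑ v, if u ∈ T ∧ v ∉ T then w u v else 0 := by
  rw [cutFun, ← Finset.sum_sum_ite_mem_and_mem]
  simp only [Finset.mem_compl]

theorem cutFun_union_add_cutFun_inter_add_cross (w : V → V → ℝ) (X Y : Finset V) :
    cutFun w (X ∪ Y) + cutFun w (X ∩ Y)
      + (∑ u ∈ X \ Y, ∑ v ∈ Y \ X, w u v + ∑ u ∈ Y \ X, ∑ v ∈ X \ Y, w u v)
      = cutFun w X + cutFun w Y := by
  rw [← Finset.sum_sum_ite_mem_and_mem (X \ Y), ← Finset.sum_sum_ite_mem_and_mem (Y \ X)]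
  simp only [cutFun_eq_sum_ite, ← Finset.sum_add_distrib]
  refine Finset.sum_congr rfl fun u _ => Finset.sum_congr rfl fun v _ => ?_
  by_cases hux : u ∈ X <;> by_cases huy : u ∈ Y <;> by_cases hvx : v ∈ X <;>
    by_cases hvy : v ∈ Y <;> simp [hux, huy, hvx, hvy]

end

section

variable {V : Type*} {k : ℕ} {w : V → V → ℝ}

theorem sum_sum_nonneg_of_le_card
    (hpos : ∀ (v : V) (A : Finset V), v ∉ A → k ≤ A.card → 0 ≤ ∑ u ∈ A, w v u)
    {P Q : Finset V} (hP : k ≤ P.card) (hQP : Disjoint Q P) :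
    0 ≤ ∑ u ∈ Q, ∑ v ∈ P, w u v :=
  Finset.sum_nonneg fun u hu => hpos u P (Finset.disjoint_left.mp hQP hu) hP

theorem cross_weight_nonneg (hsym : ∀ u v : V, w u v = w v u)
    (hpos : ∀ (v : V) (A : Finset V), v ∉ A → k ≤ A.card → 0 ≤ ∑ u ∈ A, w v u)
    {A B : Finset V} (hAB : Disjoint A B) (hcard : k ≤ A.card ∨ k ≤ B.card) :
    0 ≤ ∑ u ∈ A, ∑ v ∈ B, w u v + ∑ u ∈ B, ∑ v ∈ A, w u v := by
  have hswap : ∑ u ∈ A, ∑ v ∈ B, w u v = ∑ u ∈ B, ∑ v ∈ A, w u v := by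
    rw [Finset.sum_comm]
    simp only [hsym]
  rcases hcard with hA | hB
  · linarith [sum_sum_nonneg_of_le_card hpos hA hAB.symm]
  · linarith [sum_sum_nonneg_of_le_card hpos hB hAB]

end

theorem stmt_1_general {V : Type*} [Fintype V] [DecidableEq V] (k : ℕ)
    (w : V → V → ℝ) (hsym : ∀ u v : V, w u v = w v u)
    (hpos : ∀ (v : V) (A : Finset V), v ∉ A → k ≤ A.card → 0 ≤ ∑ u ∈ A, w v u) :
    DistantSubmodular (2 * k - 1) (cutFun w) := by
  intro X Y hXY
  have hcard : 2 * k - 1 ≤ (X \ Y).card + (Y \ X).card := by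
    rwa [symmDiff_def, Finset.sup_eq_union,
      Finset.card_union_of_disjoint disjoint_sdiff_sdiff] at hXY
  linarith [cutFun_union_add_cutFun_inter_add_cross w X Y,
    cross_weight_nonneg hsym hpos (disjoint_sdiff_sdiff (x := X) (y := Y)) (by omega)]

theorem stmt_1 {V : Type*} [Fintype V] [DecidableEq V] (k : ℕ) (hk : 1 ≤ k)
    (w : V → V → ℝ) (hsym : ∀ u v : V, w u v = w v u)
    (hpos : ∀ (v : V) (A : Finset V), v ∉ A → k ≤ A.card → 0 ≤ ∑ u ∈ A, w v u) :
    DistantSubmodular (2 * k - 1) (cutFun w) :=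
  stmt_1_general k w hsym hpos
end

section
/- Let S = {s_1, …, s_n} be a finite set, k a positive integer with 2 ≤ k ≤ n, f : 2^S → ℝ a k-distant submodular function with f(∅) = 0, and w ∈ ℝ_+^S a nonnegative weight vector with w(s_1) ≥ w(s_2) ≥ ⋯ ≥ w(s_n). Set S_0 = ∅, S_i = {s_1, …, s_i} for 1 ≤ i ≤ n, and 𝒞 = {S_i Δ T : 0 ≤ i ≤ n, T ⊆ S, |T| ≤ k−2}. Then for every vector y : 2^S → ℝ_+ with ∑_{T ⊆ S} y_T χ_T = w (where χ_T ∈ {0,1}^S is the characteristic vector of T), there exists a vector y' : 2^S → ℝ_+ with ∑_{T ⊆ S} y'_T χ_T = w, whose support {T : y'_T > 0} is contained in 𝒞, and with ∑_{T ⊆ S} y'_T f(T) ≤ ∑_{T ⊆ S} y_T f(T). -/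
open scoped symmDiff

/-- `initSeg n i = S_i = {s_1, …, s_i}`, the first `i` elements of `Fin n`. -/
def initSeg (n : ℕ) (i : ℕ) : Finset (Fin n) :=
  Finset.univ.filter (fun j : Fin n => (j : ℕ) < i)

/-!
Among all nonnegative `y'` with `∑ y'_T χ_T = w`, no mass on `∅` and cost `∑ y'_T f(T)` at most
that of `y`, a compact set, pick one maximizing `∑ y'_T |T|²`. If two sets `X`, `Y` of its support
crossed with `|X ∆ Y| ≥ k`, shifting mass from `X`, `Y` to `X ∪ Y`, `X ∩ Y` would keep `∑ y'_T χ_T`,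
not increase the cost (`k`-distant submodularity) and strictly increase `∑ y'_T |T|²`. So every
support set `X` is, with respect to every other support set, comparable or at distance `≤ k - 1`.

If moreover `|X ∆ S_i| ≥ k - 1` for all `i`, an LP-duality argument gives a contradiction: with
`λ_i = |X ∆ S_i| - (k - 1)` when `S_i` and `X` are incomparable and `λ_i = 0` otherwise, the
functional `Λ(Y) = ∑_{j ∈ Y} (λ_{j+1} - λ_j)` is `≤ 0` on every support set and `< 0` on `X`, while
Abel summation and the monotonicity of `w` give `∑_Y y'_Y Λ(Y) = ∑_j (λ_{j+1} - λ_j) w_j ≥ 0`.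
-/

open Finset

namespace FractionalCover

variable {α : Type*}

section Pairing

variable [Fintype α]

def pairing (z g : Finset α → ℝ) : ℝ := ∑ T, z T * g T

lemma continuous_pairing (g : Finset α → ℝ) : Continuous fun z => pairing z g :=
  continuous_finsetSum _ fun T _ => (continuous_apply T).mul continuous_const

lemma pairing_add_smul (z e g : Finset α → ℝ) (ε : ℝ) :
    pairing (z + ε • e) g = pairing z g + ε * pairing e g := by
  simp only [pairing, Pi.add_apply, Pi.smul_apply, smul_eq_mul, add_mul, sum_add_distrib,
    mul_sum, mul_assoc]

end Pairing

variable [DecidableEq α]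

def uncrossDir (X Y : Finset α) : Finset α → ℝ :=
  Pi.single (X ∪ Y) 1 + Pi.single (X ∩ Y) 1 - Pi.single X 1 - Pi.single Y 1

lemma add_smul_uncrossDir_nonneg {x : Finset α → ℝ} (hx : ∀ T, 0 ≤ x T) {X Y : Finset α}
    (hXY : X ≠ Y) {ε : ℝ} (hε : 0 ≤ ε) (hεX : ε ≤ x X) (hεY : ε ≤ x Y) (T : Finset α) :
    0 ≤ (x + ε • uncrossDir X Y) T := by
  have := hx T
  simp only [uncrossDir, Pi.add_apply, Pi.smul_apply, Pi.sub_apply, Pi.single_apply,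
    smul_eq_mul]
  split_ifs <;> subst_vars <;> first | exact absurd rfl hXY | nlinarith

lemma sq_card_add_sq_card_lt {X Y : Finset α} (hXY : ¬X ⊆ Y) (hYX : ¬Y ⊆ X) :
    (#X : ℝ) ^ 2 + (#Y : ℝ) ^ 2 < (#(X ∪ Y) : ℝ) ^ 2 + (#(X ∩ Y) : ℝ) ^ 2 := by
  have hX : (#X : ℝ) < #(X ∪ Y) := by
    exact_mod_cast card_lt_card (ssubset_of_subset_of_ne subset_union_left
      fun h => hYX (union_eq_left.1 h.symm))
  have hY : (#Y : ℝ) < #(X ∪ Y) := by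
    exact_mod_cast card_lt_card (ssubset_of_subset_of_ne subset_union_right
      fun h => hXY (union_eq_right.1 h.symm))
  have hsum : (#(X ∪ Y) : ℝ) + #(X ∩ Y) = #X + #Y := by
    exact_mod_cast card_union_add_card_inter X Y
  nlinarith [mul_pos (sub_pos.2 hX) (sub_pos.2 hY)]

variable [Fintype α]

def charSum (z : Finset α → ℝ) (s : α) : ℝ := ∑ T, z T * if s ∈ T then 1 else 0

/-- The coefficient of `∅` is not constrained by `charSum z = w`; it is fixed to `0` to make this
set compact. -/
def cheapCovers (f : Finset α → ℝ) (w : α → ℝ) (c : ℝ) : Set (Finset α → ℝ) :=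
  {z | (∀ T, 0 ≤ z T) ∧ charSum z = w ∧ z ∅ = 0 ∧ pairing z f ≤ c}

lemma continuous_charSum (s : α) : Continuous fun z => charSum z s :=
  continuous_pairing _

lemma pairing_uncrossDir (X Y : Finset α) (g : Finset α → ℝ) :
    pairing (uncrossDir X Y) g = g (X ∪ Y) + g (X ∩ Y) - g X - g Y := by
  simp [pairing, uncrossDir, sub_mul, add_mul, sum_add_distrib, sum_sub_distrib,
    Pi.single_apply]

lemma pairing_update_empty (z g : Finset α → ℝ) (hg : g ∅ = 0) :
    pairing (Function.update z ∅ 0) g = pairing z g := by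
  refine sum_congr rfl fun T _ => ?_
  rcases eq_or_ne T ∅ with rfl | hT
  · simp [hg]
  · rw [Function.update_of_ne hT]

lemma charSum_update_empty (z : Finset α → ℝ) : charSum (Function.update z ∅ 0) = charSum z :=
  funext fun s => pairing_update_empty z _ (if_neg (notMem_empty s))

lemma pairing_sum_eq_sum_mul_charSum (x : Finset α → ℝ) (δ : α → ℝ) :
    pairing x (fun T => ∑ j ∈ T, δ j) = ∑ j, δ j * charSum x j := by
  calc ∑ T, x T * ∑ j ∈ T, δ j = ∑ T, ∑ j, δ j * (x T * if j ∈ T then 1 else 0) := by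
        refine sum_congr rfl fun T _ => ?_
        rw [← Fintype.sum_ite_mem, mul_sum]
        exact sum_congr rfl fun j _ => by split_ifs <;> ring
    _ = _ := by rw [sum_comm]; simp only [charSum, mul_sum]

variable {f : Finset α → ℝ} {w : α → ℝ} {c : ℝ} {k : ℕ}

lemma update_empty_mem_cheapCovers (hf0 : f ∅ = 0) {z : Finset α → ℝ} (hz : ∀ T, 0 ≤ z T)
    (hzw : charSum z = w) (hzc : pairing z f ≤ c) :
    Function.update z ∅ 0 ∈ cheapCovers f w c := by
  refine ⟨fun T => ?_, (charSum_update_empty z).trans hzw, Function.update_self ..,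
    (pairing_update_empty z f hf0).trans_le hzc⟩
  rcases eq_or_ne T ∅ with rfl | hT
  · simp
  · rw [Function.update_of_ne hT]; exact hz T

lemma cheapCovers_subset_Icc (f : Finset α → ℝ) (w : α → ℝ) (c : ℝ) :
    cheapCovers f w c ⊆ Set.Icc 0 fun _ => ∑ s, |w s| := by
  rintro z ⟨hz, hzw, hz0, -⟩
  refine ⟨hz, fun T => ?_⟩
  obtain rfl | ⟨s, hs⟩ := T.eq_empty_or_nonempty
  · exact hz0.le.trans (sum_nonneg fun s _ => abs_nonneg _)
  calc z T = z T * if s ∈ T then 1 else 0 := by simp [hs]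
    _ ≤ charSum z s :=
        single_le_sum (f := fun U => z U * if s ∈ U then 1 else 0)
          (fun U _ => mul_nonneg (hz U) (by positivity)) (mem_univ T)
    _ = w s := congrFun hzw s
    _ ≤ ∑ s, |w s| :=
        (le_abs_self _).trans (single_le_sum (fun s _ => abs_nonneg (w s)) (mem_univ s))

lemma isCompact_cheapCovers (f : Finset α → ℝ) (w : α → ℝ) (c : ℝ) :
    IsCompact (cheapCovers f w c) := by
  refine isCompact_Icc.of_isClosed_subset ?_ (cheapCovers_subset_Icc f w c)
  have hw : IsClosed {z : Finset α → ℝ | charSum z = w} := by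
    simp only [funext_iff, Set.ofPred_forall]
    exact isClosed_iInter fun s => isClosed_eq (continuous_charSum s) continuous_const
  simp only [cheapCovers, Set.ofPred_and, Set.ofPred_forall]
  exact (isClosed_iInter fun T => isClosed_le continuous_const (continuous_apply T)).inter
    (hw.inter ((isClosed_eq (continuous_apply ∅) continuous_const).inter
      (isClosed_le (continuous_pairing f) continuous_const)))

lemma exists_lt_pairing_sq_card (hf : DistantSubmodular k f) (hf0 : f ∅ = 0)
    {x : Finset α → ℝ} (hx : x ∈ cheapCovers f w c) {X Y : Finset α} (hX : 0 < x X)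
    (hY : 0 < x Y) (hXY : ¬X ⊆ Y) (hYX : ¬Y ⊆ X) (hk : k ≤ #(X ∆ Y)) :
    ∃ z ∈ cheapCovers f w c,
      pairing x (fun T => (#T : ℝ) ^ 2) < pairing z (fun T => (#T : ℝ) ^ 2) := by
  obtain ⟨hx0, hxw, -, hxc⟩ := hx
  set ε := min (x X) (x Y)
  have hε : 0 < ε := lt_min hX hY
  set z := x + ε • uncrossDir X Y
  have hz0 : ∀ T, 0 ≤ z T := add_smul_uncrossDir_nonneg hx0 (fun h => hXY h.le) hε.le
    (min_le_left _ _) (min_le_right _ _)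
  have hzw : charSum z = w := by
    refine funext fun s => (pairing_add_smul x _ _ ε).trans ?_
    rw [pairing_uncrossDir, ← congrFun hxw s]
    by_cases hsX : s ∈ X <;> by_cases hsY : s ∈ Y <;> simp [charSum, pairing, hsX, hsY]
  have hzc : pairing z f ≤ c := by
    rw [pairing_add_smul, pairing_uncrossDir]
    nlinarith [hf X Y hk]
  refine ⟨Function.update z ∅ 0, update_empty_mem_cheapCovers hf0 hz0 hzw hzc, ?_⟩
  rw [pairing_update_empty _ _ (by simp), pairing_add_smul, pairing_uncrossDir]
  nlinarith [sq_card_add_sq_card_lt hXY hYX]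

lemma subset_or_subset_or_card_symmDiff_lt_of_isMaxOn (hf : DistantSubmodular k f)
    (hf0 : f ∅ = 0) {x : Finset α → ℝ} (hx : x ∈ cheapCovers f w c)
    (hmax : IsMaxOn (fun z => pairing z fun T => (#T : ℝ) ^ 2) (cheapCovers f w c) x)
    {X Y : Finset α} (hX : 0 < x X) (hY : 0 < x Y) : X ⊆ Y ∨ Y ⊆ X ∨ #(X ∆ Y) < k := by
  by_contra! h
  obtain ⟨z, hz, hlt⟩ := exists_lt_pairing_sq_card hf hf0 hx hX hY h.1 h.2.1 h.2.2
  exact (hmax hz).not_gt hlt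

end FractionalCover

lemma Finset.symmDiff_insert_of_mem {α : Type*} [DecidableEq α] {X S : Finset α} {a : α}
    (haX : a ∈ X) (haS : a ∉ S) : X ∆ insert a S = (X ∆ S).erase a := by
  ext b
  by_cases hb : b = a
  · subst hb; simp [mem_symmDiff, haX, haS]
  · simp [mem_symmDiff, hb]

lemma Finset.symmDiff_insert_of_notMem {α : Type*} [DecidableEq α] {X S : Finset α} {a : α}
    (haX : a ∉ X) (haS : a ∉ S) : X ∆ insert a S = insert a (X ∆ S) := by
  ext b
  by_cases hb : b = a
  · subst hb; simp [mem_symmDiff, haX, haS]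
  · simp [mem_symmDiff, hb]

lemma sum_sub_mul_nonneg_of_antitone {a : ℕ → ℝ} {n : ℕ} (h0 : a 0 = 0) (hn : a n = 0)
    (ha : ∀ i ≤ n, 0 ≤ a i) {w : Fin n → ℝ} (hw : Antitone w) :
    0 ≤ ∑ j : Fin n, (a (j + 1) - a j) * w j := by
  set W : ℕ → ℝ := fun i => if h : i < n then w ⟨i, h⟩ else 0
  have hWw : ∀ j : Fin n, w j = W j := fun j => by simp [W]
  simp only [hWw]
  rw [Fin.sum_univ_eq_sum_range (fun i => (a (i + 1) - a i) * W i)]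
  have hsplit : ∀ i, (a (i + 1) - a i) * W i =
      a (i + 1) * (W i - W (i + 1)) + (a (i + 1) * W (i + 1) - a i * W i) := fun i => by ring
  rw [sum_congr rfl fun i _ => hsplit i, sum_add_distrib, sum_range_sub (fun i => a i * W i),
    h0, hn, zero_mul, zero_mul, sub_zero, add_zero]
  refine sum_nonneg fun i hi => ?_
  rw [mem_range] at hi
  rcases (show i + 1 ≤ n from hi).lt_or_eq with hlt | heq
  · refine mul_nonneg (ha _ hlt.le) (sub_nonneg.2 ?_)
    simpa [W, hlt, hi] using hw (show (⟨i, hi⟩ : Fin n) ≤ ⟨i + 1, hlt⟩ from Nat.le_succ i)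
  · rw [heq, hn, zero_mul]

section InitSeg

variable {n : ℕ} {X : Finset (Fin n)}

lemma mem_initSeg {j : Fin n} {i : ℕ} : j ∈ initSeg n i ↔ (j : ℕ) < i := by
  simp [initSeg]

lemma mem_initSeg_of_lt {i j : Fin n} (h : i < j) : i ∈ initSeg n j := mem_initSeg.2 h

lemma notMem_initSeg_self (j : Fin n) : j ∉ initSeg n j := by
  simp [mem_initSeg]

lemma initSeg_zero : initSeg n 0 = ∅ := by
  ext j; simp [mem_initSeg]

lemma subset_initSeg_self (X : Finset (Fin n)) : X ⊆ initSeg n n :=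
  fun j _ => mem_initSeg.2 j.isLt

lemma initSeg_succ (j : Fin n) : initSeg n (j + 1) = insert j (initSeg n j) := by
  ext i
  simp only [mem_initSeg, mem_insert, Fin.ext_iff]
  omega

lemma subset_initSeg_of_subset_initSeg_succ {j : Fin n} (hj : j ∉ X)
    (h : X ⊆ initSeg n (j + 1)) : X ⊆ initSeg n j := by
  rw [initSeg_succ] at h
  exact fun i hi => (mem_insert.1 (h hi)).resolve_left fun e => hj (e ▸ hi)

lemma card_symmDiff_initSeg_succ_of_mem {j : Fin n} (hj : j ∈ X) :
    #(X ∆ initSeg n (j + 1)) + 1 = #(X ∆ initSeg n j) := by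
  rw [initSeg_succ, symmDiff_insert_of_mem hj (notMem_initSeg_self j), card_erase_add_one]
  exact mem_symmDiff.2 (Or.inl ⟨hj, notMem_initSeg_self j⟩)

lemma card_symmDiff_initSeg_succ_of_notMem {j : Fin n} (hj : j ∉ X) :
    #(X ∆ initSeg n (j + 1)) = #(X ∆ initSeg n j) + 1 := by
  rw [initSeg_succ, symmDiff_insert_of_notMem hj (notMem_initSeg_self j), card_insert_of_notMem]
  simp [mem_symmDiff, hj, notMem_initSeg_self j]

end InitSeg

section Certificate

variable {n m : ℕ} {X : Finset (Fin n)}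

def FarFromInitSegs (m : ℕ) (X : Finset (Fin n)) : Prop :=
  ∀ i ≤ n, m ≤ #(X ∆ initSeg n i)

/-- The dual solution `λ` (with `m = k - 1`) of the LP argument. -/
noncomputable def certificate (m : ℕ) (X : Finset (Fin n)) (i : ℕ) : ℝ :=
  if initSeg n i ⊆ X ∨ X ⊆ initSeg n i then 0 else (#(X ∆ initSeg n i) : ℝ) - m

lemma certificate_of_subset {i : ℕ} (h : initSeg n i ⊆ X) : certificate m X i = 0 :=
  if_pos (Or.inl h)

lemma certificate_of_superset {i : ℕ} (h : X ⊆ initSeg n i) : certificate m X i = 0 :=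
  if_pos (Or.inr h)

lemma certificate_of_not_subset {i : ℕ} (h₁ : ¬initSeg n i ⊆ X) (h₂ : ¬X ⊆ initSeg n i) :
    certificate m X i = #(X ∆ initSeg n i) - m :=
  if_neg (by tauto)

lemma certificate_zero : certificate m X 0 = 0 :=
  certificate_of_subset (by simp [initSeg_zero])

lemma certificate_self : certificate m X n = 0 :=
  certificate_of_superset (subset_initSeg_self X)

lemma certificate_nonneg (hX : FarFromInitSegs m X) {i : ℕ} (hi : i ≤ n) :
    0 ≤ certificate m X i := by
  unfold certificate
  split_ifs
  · rfl
  · exact sub_nonneg.2 (by exact_mod_cast hX i hi)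

lemma certificate_le (hX : FarFromInitSegs m X) {i : ℕ} (hi : i ≤ n) :
    certificate m X i ≤ #(X ∆ initSeg n i) - m := by
  unfold certificate
  split_ifs
  · exact sub_nonneg.2 (by exact_mod_cast hX i hi)
  · rfl

lemma certificate_succ_le_sub_one (hX : FarFromInitSegs m X) {j : Fin n} (hj : j ∈ X)
    (hS : ¬initSeg n j ⊆ X) : certificate m X (j + 1) ≤ certificate m X j - 1 := by
  have hcard : (#(X ∆ initSeg n (j + 1)) : ℝ) + 1 = #(X ∆ initSeg n j) := by
    exact_mod_cast card_symmDiff_initSeg_succ_of_mem hj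
  rw [certificate_of_not_subset hS fun h => notMem_initSeg_self j (h hj)]
  linarith [certificate_le hX (Nat.succ_le_of_lt j.isLt)]

lemma certificate_succ_le (hX : FarFromInitSegs m X) {j : Fin n} (hj : j ∈ X) :
    certificate m X (j + 1) ≤ certificate m X j := by
  by_cases hS : initSeg n j ⊆ X
  · rw [certificate_of_subset hS,
      certificate_of_subset (by rw [initSeg_succ]; exact insert_subset hj hS)]
  · linarith [certificate_succ_le_sub_one hX hj hS]

lemma certificate_le_succ (hX : FarFromInitSegs m X) {j : Fin n} (hj : j ∉ X) :
    certificate m X j ≤ certificate m X (j + 1) := by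
  by_cases hXS : X ⊆ initSeg n j
  · rw [certificate_of_superset hXS]
    exact certificate_nonneg hX (Nat.succ_le_of_lt j.isLt)
  have hcard : (#(X ∆ initSeg n (j + 1)) : ℝ) = #(X ∆ initSeg n j) + 1 := by
    exact_mod_cast card_symmDiff_initSeg_succ_of_notMem hj
  rw [certificate_of_not_subset (fun h => hj (h (by simp [initSeg_succ])))
    fun h => hXS (subset_initSeg_of_subset_initSeg_succ hj h)]
  linarith [certificate_le hX j.isLt.le]

lemma certificate_succ_le_add_one (hX : FarFromInitSegs m X) {j : Fin n} (hj : j ∉ X)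
    (hS : ¬initSeg n j ⊆ X) : certificate m X (j + 1) ≤ certificate m X j + 1 := by
  by_cases hXS : X ⊆ initSeg n j
  · rw [certificate_of_superset hXS, certificate_of_superset
      (hXS.trans (by rw [initSeg_succ]; exact subset_insert _ _))]
    norm_num
  have hcard : (#(X ∆ initSeg n (j + 1)) : ℝ) = #(X ∆ initSeg n j) + 1 := by
    exact_mod_cast card_symmDiff_initSeg_succ_of_notMem hj
  rw [certificate_of_not_subset hS hXS]
  linarith [certificate_le hX (Nat.succ_le_of_lt j.isLt)]

noncomputable def certificateSum (m : ℕ) (X Y : Finset (Fin n)) : ℝ :=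
  ∑ j ∈ Y, (certificate m X (j + 1) - certificate m X j)

lemma certificateSum_univ : certificateSum m X univ = 0 := by
  rw [certificateSum, Fin.sum_univ_eq_sum_range (fun i => certificate m X (i + 1) -
    certificate m X i), sum_range_sub, certificate_self, certificate_zero, sub_zero]

lemma certificateSum_nonpos_of_subset (hX : FarFromInitSegs m X) {Y : Finset (Fin n)}
    (hYX : Y ⊆ X) : certificateSum m X Y ≤ 0 :=
  sum_nonpos fun _ hj => sub_nonpos.2 (certificate_succ_le hX (hYX hj))

lemma certificateSum_nonpos_of_superset (hX : FarFromInitSegs m X) {Y : Finset (Fin n)}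
    (hXY : X ⊆ Y) : certificateSum m X Y ≤ 0 := by
  have hsum : certificateSum m X Y + certificateSum m X Yᶜ = 0 :=
    (sum_add_sum_compl Y _).trans certificateSum_univ
  have hcompl : 0 ≤ certificateSum m X Yᶜ :=
    sum_nonneg fun j hj =>
      sub_nonneg.2 (certificate_le_succ hX fun hjX => mem_compl.1 hj (hXY hjX))
  linarith

lemma certificateSum_inter_le (hX : FarFromInitSegs m X) {l : Fin n} (hl : l ∉ X)
    (Y : Finset (Fin n)) : certificateSum m X (Y ∩ X) ≤ -#((Y ∩ X) \ initSeg n l) := by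
  calc certificateSum m X (Y ∩ X)
      ≤ ∑ j ∈ Y ∩ X, if j ∈ initSeg n l then (0 : ℝ) else -1 := by
        refine sum_le_sum fun j hj => ?_
        have hjX := (mem_inter.1 hj).2
        split_ifs with hjl
        · exact sub_nonpos.2 (certificate_succ_le hX hjX)
        · have hlj : l < j := lt_of_le_of_ne (by simpa [mem_initSeg] using hjl)
            fun e => hl (e ▸ hjX)
          linarith [certificate_succ_le_sub_one hX hjX fun h => hl (h (mem_initSeg_of_lt hlj))]
    _ = -#((Y ∩ X) \ initSeg n l) := by
        simp [sum_ite, filter_notMem_eq_sdiff]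

lemma certificateSum_sdiff_le (hX : FarFromInitSegs m X) {l : Fin n} (hl : l ∉ X)
    (hlmin : ∀ j ∉ X, l ≤ j) (Y : Finset (Fin n)) :
    certificateSum m X (Y \ X) ≤ #(Y \ X) + ((#(X ∆ initSeg n l) : ℝ) - m) := by
  have hml : (m : ℝ) ≤ #(X ∆ initSeg n l) := by exact_mod_cast hX l l.isLt.le
  calc certificateSum m X (Y \ X)
      ≤ ∑ j ∈ Y \ X, (1 + if j = l then (#(X ∆ initSeg n l) : ℝ) - m else 0) := by
        refine sum_le_sum fun j hj => ?_
        have hjX := (mem_sdiff.1 hj).2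
        split_ifs with hjl
        · subst hjl
          have hcard : (#(X ∆ initSeg n (j + 1)) : ℝ) = #(X ∆ initSeg n j) + 1 := by
            exact_mod_cast card_symmDiff_initSeg_succ_of_notMem hjX
          linarith [certificate_le hX (Nat.succ_le_of_lt j.isLt),
            certificate_nonneg hX j.isLt.le]
        · have hlj : l < j := lt_of_le_of_ne (hlmin j hjX) (Ne.symm hjl)
          linarith [certificate_succ_le_add_one hX hjX fun h => hl (h (mem_initSeg_of_lt hlj))]
    _ = #(Y \ X) + if l ∈ Y \ X then (#(X ∆ initSeg n l) : ℝ) - m else 0 := by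
        rw [sum_add_distrib, sum_ite_eq']
        simp
    _ ≤ #(Y \ X) + ((#(X ∆ initSeg n l) : ℝ) - m) := by
        split_ifs <;> linarith

lemma certificateSum_le (hm : 0 < m) (hX : FarFromInitSegs m X) (Y : Finset (Fin n)) :
    certificateSum m X Y ≤ (#(X ∆ Y) : ℝ) - m := by
  have hne : Xᶜ.Nonempty := by
    rw [nonempty_iff_ne_empty, Ne, compl_eq_empty_iff]
    rintro rfl
    have h := hX n le_rfl
    rw [symmDiff_of_le (subset_initSeg_self univ), sdiff_eq_empty_iff_subset.2 (subset_univ _),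
      card_empty] at h
    omega
  set l := Xᶜ.min' hne
  have hl : l ∉ X := mem_compl.1 (min'_mem _ _)
  have hlmin : ∀ j ∉ X, l ≤ j := fun j hj => min'_le _ _ (mem_compl.2 hj)
  have hSl : initSeg n l ⊆ X := fun i hi => by
    by_contra hiX
    exact absurd (mem_initSeg.1 hi) (not_lt.2 (hlmin i hiX))
  have hdl : (#(X ∆ initSeg n l) : ℝ) = #(X \ initSeg n l) := by rw [symmDiff_of_ge hSl]
  have hcover : (#(X \ initSeg n l) : ℝ) ≤ #((Y ∩ X) \ initSeg n l) + #(X \ Y) := by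
    exact_mod_cast (card_le_card fun j => by
      simp only [mem_sdiff, mem_union, mem_inter]; tauto).trans (card_union_le _ _)
  have hsymm : (#(X ∆ Y) : ℝ) = #(X \ Y) + #(Y \ X) := by
    rw [symmDiff_def, sup_eq_union, card_union_of_disjoint disjoint_sdiff_sdiff, Nat.cast_add]
  have hsplit : certificateSum m X Y = certificateSum m X (Y ∩ X) + certificateSum m X (Y \ X) :=
    (sum_inter_add_sum_sdiff Y X _).symm
  linarith [certificateSum_inter_le hX hl Y, certificateSum_sdiff_le hX hl hlmin Y]

lemma certificateSum_nonpos (hm : 0 < m) (hX : FarFromInitSegs m X) {Y : Finset (Fin n)}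
    (h : X ⊆ Y ∨ Y ⊆ X ∨ #(X ∆ Y) ≤ m) : certificateSum m X Y ≤ 0 := by
  rcases h with h | h | h
  · exact certificateSum_nonpos_of_superset hX h
  · exact certificateSum_nonpos_of_subset hX h
  · have h' : (#(X ∆ Y) : ℝ) ≤ m := by exact_mod_cast h
    linarith [certificateSum_le hm hX Y]

lemma certificateSum_self_le (hm : 0 < m) (hX : FarFromInitSegs m X) :
    certificateSum m X X ≤ -m := by
  simpa using certificateSum_le hm hX X

end Certificate

open FractionalCover in
lemma exists_card_symmDiff_initSeg_lt {n m : ℕ} (hm : 0 < m) {w : Fin n → ℝ} (hw : Antitone w)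
    {x : Finset (Fin n) → ℝ} (hx0 : ∀ T, 0 ≤ x T) (hxw : charSum x = w) {X : Finset (Fin n)}
    (hX : 0 < x X) (hcompat : ∀ Y, 0 < x Y → X ⊆ Y ∨ Y ⊆ X ∨ #(X ∆ Y) ≤ m) :
    ∃ i ≤ n, #(X ∆ initSeg n i) < m := by
  by_contra! hfar
  have hdual : 0 ≤ pairing x (certificateSum m X) := by
    unfold certificateSum
    rw [pairing_sum_eq_sum_mul_charSum, hxw]
    exact sum_sub_mul_nonneg_of_antitone certificate_zero certificate_self
      (fun i hi => certificate_nonneg hfar hi) hw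
  have hrest : ∑ Y ∈ univ.erase X, x Y * certificateSum m X Y ≤ 0 := sum_nonpos fun Y _ => by
    rcases (hx0 Y).eq_or_lt with h | h
    · rw [← h, zero_mul]
    · exact mul_nonpos_of_nonneg_of_nonpos h.le (certificateSum_nonpos hm hfar (hcompat Y h))
  have hself : x X * certificateSum m X X ≤ x X * -m :=
    mul_le_mul_of_nonneg_left (certificateSum_self_le hm hfar) hX.le
  rw [pairing, ← add_sum_erase _ _ (mem_univ X)] at hdual
  linarith [mul_pos hX (Nat.cast_pos.2 hm : (0 : ℝ) < m)]

open FractionalCover in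
theorem stmt_2_general (n k : ℕ) (hk2 : 2 ≤ k)
    (f : Finset (Fin n) → ℝ) (hf : DistantSubmodular k f) (hf0 : f ∅ = 0)
    (w : Fin n → ℝ)
    (hw_mono : ∀ i j : Fin n, i ≤ j → w j ≤ w i)
    (C : Set (Finset (Fin n)))
    (hC : C = {U | ∃ i ≤ n, ∃ T : Finset (Fin n), T.card ≤ k - 2 ∧ U = initSeg n i ∆ T})
    (y : Finset (Fin n) → ℝ) (hy_nonneg : ∀ T, 0 ≤ y T)
    (hy_feas : ∀ s : Fin n, ∑ T : Finset (Fin n), y T * (if s ∈ T then 1 else 0) = w s) :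
    ∃ y' : Finset (Fin n) → ℝ,
      (∀ T, 0 ≤ y' T) ∧
      (∀ s : Fin n, ∑ T : Finset (Fin n), y' T * (if s ∈ T then 1 else 0) = w s) ∧
      (∀ T, 0 < y' T → T ∈ C) ∧
      ∑ T : Finset (Fin n), y' T * f T ≤ ∑ T : Finset (Fin n), y T * f T := by
  subst hC
  have hyK : Function.update y ∅ 0 ∈ cheapCovers f w (pairing y f) :=
    update_empty_mem_cheapCovers hf0 hy_nonneg (funext hy_feas) le_rfl
  obtain ⟨x, hxK, hxmax⟩ := (isCompact_cheapCovers f w _).exists_isMaxOn ⟨_, hyK⟩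
    (continuous_pairing fun T => (#T : ℝ) ^ 2).continuousOn
  have ⟨hx0, hxw, _, hxc⟩ := hxK
  refine ⟨x, hx0, congrFun hxw, fun X hX => ?_, hxc⟩
  have hcompat (Y : Finset (Fin n)) (hY : 0 < x Y) : X ⊆ Y ∨ Y ⊆ X ∨ #(X ∆ Y) ≤ k - 1 :=
    (subset_or_subset_or_card_symmDiff_lt_of_isMaxOn hf hf0 hxK hxmax hX hY).imp_right
      (Or.imp_right fun h => by omega)
  obtain ⟨i, hi, hclose⟩ := exists_card_symmDiff_initSeg_lt (by omega) hw_mono hx0 hxw hX hcompat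
  exact ⟨i, hi, initSeg n i ∆ X, by rw [symmDiff_comm]; omega,
    (symmDiff_symmDiff_cancel_left _ _).symm⟩

theorem stmt_2 (n k : ℕ) (hk2 : 2 ≤ k) (hkn : k ≤ n)
    (f : Finset (Fin n) → ℝ) (hf : DistantSubmodular k f) (hf0 : f ∅ = 0)
    (w : Fin n → ℝ) (hw_nonneg : ∀ s : Fin n, 0 ≤ w s)
    (hw_mono : ∀ i j : Fin n, i ≤ j → w j ≤ w i)
    (C : Set (Finset (Fin n)))
    (hC : C = {U | ∃ i ≤ n, ∃ T : Finset (Fin n), T.card ≤ k - 2 ∧ U = initSeg n i ∆ T})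
    (y : Finset (Fin n) → ℝ) (hy_nonneg : ∀ T, 0 ≤ y T)
    (hy_feas : ∀ s : Fin n, ∑ T : Finset (Fin n), y T * (if s ∈ T then 1 else 0) = w s) :
    ∃ y' : Finset (Fin n) → ℝ,
      (∀ T, 0 ≤ y' T) ∧
      (∀ s : Fin n, ∑ T : Finset (Fin n), y' T * (if s ∈ T then 1 else 0) = w s) ∧
      (∀ T, 0 < y' T → T ∈ C) ∧
      ∑ T : Finset (Fin n), y' T * f T ≤ ∑ T : Finset (Fin n), y T * f T :=
  stmt_2_general n k hk2 f hf hf0 w hw_mono C hC y hy_nonneg hy_feas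
end

section
/- Let S be a finite set, k a positive integer with 2 ≤ k ≤ |S|, f : 2^S → ℝ a k-distant submodular function with f(∅) = 0, and w ∈ ℝ_+^S. Suppose y : 2^S → ℝ_+ satisfies ∑_{T ⊆ S} y_T χ_T = w, minimizes ∑_{T ⊆ S} y_T f(T) among all such nonnegative vectors, and, among all such minimizers, also minimizes ∑_{T ⊆ S} y_T |T| |S \ T|. Then every pair of sets X, Y in the support {T : y_T > 0} satisfies at least one of: (i) X ⊆ Y or Y ⊆ X; (ii) |X Δ Y| ≤ k − 1. -/
open scoped symmDiff

theorem stmt_3 {α : Type*} [Fintype α] [DecidableEq α] (k : ℕ)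
    (hk2 : 2 ≤ k) (hkn : k ≤ Fintype.card α)
    (f : Finset α → ℝ) (hf : DistantSubmodular k f) (hf0 : f ∅ = 0)
    (w : α → ℝ) (hw_nonneg : ∀ s : α, 0 ≤ w s)
    (y : Finset α → ℝ) (hy_nonneg : ∀ T, 0 ≤ y T)
    (hy_feas : ∀ s : α, ∑ T : Finset α, y T * (if s ∈ T then 1 else 0) = w s)
    (hy_min : ∀ z : Finset α → ℝ, (∀ T, 0 ≤ z T) →
      (∀ s : α, ∑ T : Finset α, z T * (if s ∈ T then 1 else 0) = w s) →
      ∑ T : Finset α, y T * f T ≤ ∑ T : Finset α, z T * f T)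
    (hy_min2 : ∀ z : Finset α → ℝ, (∀ T, 0 ≤ z T) →
      (∀ s : α, ∑ T : Finset α, z T * (if s ∈ T then 1 else 0) = w s) →
      (∑ T : Finset α, z T * f T = ∑ T : Finset α, y T * f T) →
      ∑ T : Finset α, y T * ((T.card : ℝ) * (Tᶜ.card : ℝ)) ≤
        ∑ T : Finset α, z T * ((T.card : ℝ) * (Tᶜ.card : ℝ)))
    (X Y : Finset α) (hX : 0 < y X) (hY : 0 < y Y) :
    X ⊆ Y ∨ Y ⊆ X ∨ (X ∆ Y).card ≤ k - 1 := by
  by_contra hcon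
  push_neg at hcon
  obtain ⟨hXY, hYX, hcard⟩ := hcon
  have hcard' : k ≤ (X ∆ Y).card := by omega
  -- distinctness facts
  have h1 : X ∪ Y ≠ X := fun h => hYX (by rw [← h]; exact Finset.subset_union_right)
  have h2 : X ∪ Y ≠ Y := fun h => hXY (by rw [← h]; exact Finset.subset_union_left)
  have h3 : X ∩ Y ≠ X := fun h => hXY (by rw [← h]; exact Finset.inter_subset_right)
  have h4 : X ∩ Y ≠ Y := fun h => hYX (by rw [← h]; exact Finset.inter_subset_left)
  have h5 : X ≠ Y := fun h => hXY (h ▸ Finset.Subset.refl X)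
  have h6 : X ∪ Y ≠ X ∩ Y := fun h =>
    hXY ((Finset.subset_union_left (s₂ := Y)).trans (h ▸ Finset.inter_subset_right))
  set ε : ℝ := min (y X) (y Y) with hε
  have hεpos : 0 < ε := lt_min hX hY
  set z : Finset α → ℝ := fun T =>
    y T + ε * ((if T = X ∪ Y then 1 else 0) + (if T = X ∩ Y then 1 else 0)
      - (if T = X then 1 else 0) - (if T = Y then 1 else 0)) with hz
  have key : ∀ g : Finset α → ℝ, ∑ T : Finset α, z T * g T =
      ∑ T : Finset α, y T * g T + ε * (g (X ∪ Y) + g (X ∩ Y) - g X - g Y) := by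
    intro g
    have hterm : ∀ T, z T * g T = y T * g T
        + (ε * (if T = X ∪ Y then g T else 0) + ε * (if T = X ∩ Y then g T else 0)
          - ε * (if T = X then g T else 0) - ε * (if T = Y then g T else 0)) := by
      intro T
      simp only [hz]
      split_ifs <;> ring
    rw [Finset.sum_congr rfl (fun T _ => hterm T)]
    rw [Finset.sum_add_distrib]
    congr 1
    simp [Finset.sum_sub_distrib, Finset.sum_add_distrib, ← Finset.mul_sum,
      Finset.sum_ite_eq', Finset.mem_univ]
    ring
  have hznn : ∀ T, 0 ≤ z T := by
    intro T
    simp only [hz]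
    rcases eq_or_ne T X with rfl | hTX
    · simp [h1.symm ∘ Eq.symm, h3.symm ∘ Eq.symm, h5]
      have : ε ≤ y T := min_le_left _ _
      split_ifs <;> linarith
    rcases eq_or_ne T Y with rfl | hTY
    · have : ε ≤ y T := min_le_right _ _
      split_ifs <;> linarith
    · have := hy_nonneg T
      split_ifs <;> linarith
  have hzfeas : ∀ s : α, ∑ T : Finset α, z T * (if s ∈ T then 1 else 0) = w s := by
    intro s
    rw [key (fun T => if s ∈ T then 1 else 0), hy_feas s]
    have : ((if s ∈ X ∪ Y then (1:ℝ) else 0) + (if s ∈ X ∩ Y then 1 else 0)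
        - (if s ∈ X then 1 else 0) - (if s ∈ Y then 1 else 0)) = 0 := by
      by_cases hsX : s ∈ X <;> by_cases hsY : s ∈ Y <;>
        simp [Finset.mem_union, Finset.mem_inter, hsX, hsY]
    rw [this]; ring
  -- objective equality
  have hsub := hf X Y hcard'
  have hfeq : ∑ T : Finset α, z T * f T = ∑ T : Finset α, y T * f T := by
    have hle := hy_min z hznn hzfeas
    have hze : ∑ T : Finset α, z T * f T =
        ∑ T : Finset α, y T * f T + ε * (f (X ∪ Y) + f (X ∩ Y) - f X - f Y) := key f
    nlinarith [hεpos, hsub]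
  have hmin2 := hy_min2 z hznn hzfeas hfeq
  have hzc := key (fun T => (T.card : ℝ) * (Tᶜ.card : ℝ))
  -- cardinality arithmetic
  set n : ℕ := Fintype.card α
  have hcompl : ∀ T : Finset α, ((Tᶜ.card : ℝ)) = (n : ℝ) - (T.card : ℝ) := by
    intro T
    rw [Finset.card_compl, Nat.cast_sub (Finset.card_le_univ T)]
  have hui : ((X ∪ Y).card : ℝ) + ((X ∩ Y).card : ℝ) = (X.card : ℝ) + (Y.card : ℝ) := by
    have := Finset.card_union_add_card_inter X Y
    exact_mod_cast congrArg (Nat.cast : ℕ → ℝ) this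
  have hiX : (X ∩ Y).card < X.card :=
    Finset.card_lt_card (Finset.ssubset_iff_subset_ne.mpr ⟨Finset.inter_subset_left, h3⟩)
  have hiY : (X ∩ Y).card < Y.card :=
    Finset.card_lt_card (Finset.ssubset_iff_subset_ne.mpr ⟨Finset.inter_subset_right, h4⟩)
  have hiX' : ((X ∩ Y).card : ℝ) < (X.card : ℝ) := by exact_mod_cast hiX
  have hiY' : ((X ∩ Y).card : ℝ) < (Y.card : ℝ) := by exact_mod_cast hiY
  have hneg : ((X ∪ Y).card : ℝ) * (((X ∪ Y)ᶜ).card : ℝ)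
      + ((X ∩ Y).card : ℝ) * (((X ∩ Y)ᶜ).card : ℝ)
      - (X.card : ℝ) * ((Xᶜ).card : ℝ) - (Y.card : ℝ) * ((Yᶜ).card : ℝ) < 0 := by
    rw [hcompl, hcompl, hcompl, hcompl]
    nlinarith [mul_pos (sub_pos.mpr hiX') (sub_pos.mpr hiY'), hui]
  rw [hzc] at hmin2
  nlinarith [mul_pos hεpos (neg_pos.mpr hneg)]
end

section
/- Let S be a finite set, q ≥ 3 an integer, and p a positive integer with p ≥ (q−1)(q−2)/2 + 1. Then every p/q-submodular function f : 2^S → ℝ is (2q−3)-distant submodular. -/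
open scoped symmDiff Classical

/-- A set function `f` is `p/q`-submodular if for every `q` pairwise distinct subsets
there are at least `p` index pairs `(i, j)` with `i < j` satisfying the submodular
inequality. -/
def PQSubmodular {α : Type*} [DecidableEq α] (p q : ℕ) (f : Finset α → ℝ) : Prop :=
  ∀ T : Fin q → Finset α, Function.Injective T →
    p ≤ (Finset.univ.filter (fun ij : Fin q × Fin q =>
      ij.1 < ij.2 ∧ f (T ij.1 ∪ T ij.2) + f (T ij.1 ∩ T ij.2) ≤ f (T ij.1) + f (T ij.2))).card

/-! If the submodular inequality fails for `(X, Y)` with `|X \ Y| ≥ q - 1`, choose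
`Aᵢ ⊆ X \ Y` with `|Aᵢ| = i` for `1 ≤ i ≤ q - 2`. The inequalities for `(X, Y ∪ Aᵢ)` and
`(X ∩ Y ∪ Aᵢ, Y)` add up to the one for `(X, Y)`, so one of them fails. Taking for each `i` the
set `Wᵢ` that lies in a failing pair yields `q` sets `Y, W₁, …, W_{q-2}, X`, distinct because
`|Wᵢ ∩ (X \ Y)| = i`, with at least `q - 1` failing pairs; so at most `(q - 1)(q - 2)/2` pairs
are good. Finally, if `|X ∆ Y| ≥ 2q - 3` then one of `X \ Y`, `Y \ X` has at least `q - 1`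
elements. -/

open Finset

section SubmodularPair

variable {α : Type*} [DecidableEq α] {f : Finset α → ℝ}

def IsSubmodularPair (f : Finset α → ℝ) (X Y : Finset α) : Prop :=
  f (X ∪ Y) + f (X ∩ Y) ≤ f X + f Y

theorem isSubmodularPair_comm {X Y : Finset α} :
    IsSubmodularPair f X Y ↔ IsSubmodularPair f Y X := by
  simp only [IsSubmodularPair, union_comm, inter_comm, add_comm (f X)]

theorem IsSubmodularPair.of_intermediate {X Y Z : Finset α} (hYZ : Y ⊆ Z) (hZ : Z ⊆ X ∪ Y)
    (hXZ : IsSubmodularPair f X Z) (hY : IsSubmodularPair f (X ∩ Z) Y) :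
    IsSubmodularPair f X Y := by
  have hunion : X ∪ Z = X ∪ Y := by
    apply Subset.antisymm (union_subset subset_union_left hZ)
    exact union_subset_union_right hYZ
  have hinter : X ∩ Z ∩ Y = X ∩ Y := by
    rw [inter_assoc, inter_eq_right.mpr hYZ]
  have hunion' : X ∩ Z ∪ Y = Z := by
    ext x; have := @hYZ x; have := @hZ x; simp only [mem_union, mem_inter] at *; tauto
  unfold IsSubmodularPair at *
  rw [hunion] at hXZ
  rw [hunion', hinter] at hY
  linarith

theorem PQSubmodular.add_card_not_isSubmodularPair_le {p q : ℕ} (hf : PQSubmodular p q f)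
    {T : Fin q → Finset α} (hT : Function.Injective T) :
    p + #{ij : Fin q × Fin q | ij.1 < ij.2 ∧ ¬IsSubmodularPair f (T ij.1) (T ij.2)}
      ≤ q.choose 2 := by
  have hsplit := card_filter_add_card_filter_not
    (s := {ij : Fin q × Fin q | ij.1 < ij.2}) (fun ij => IsSubmodularPair f (T ij.1) (T ij.2))
  rw [filter_filter, filter_filter, Fintype.card_product_filter_lt, Fintype.card_fin] at hsplit
  have := hf T hT
  unfold IsSubmodularPair at hsplit ⊢
  omega

/-- When `(X, Y)` violates submodularity, the middle member `Wᵢ` violates it together with `X`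
(if `Wᵢ = Y ∪ Aᵢ`) or with `Y` (if `Wᵢ = X ∩ (Y ∪ Aᵢ)`). -/
noncomputable def chainFamily (f : Finset α → ℝ) (X Y : Finset α) {n : ℕ}
    (A : Fin (n + 2) → Finset α) (i : Fin (n + 2)) : Finset α :=
  if i = 0 then Y
  else if i = Fin.last (n + 1) then X
  else if IsSubmodularPair f X (Y ∪ A i) then X ∩ (Y ∪ A i) else Y ∪ A i

section chainFamily

variable {X Y : Finset α} {n : ℕ} {A : Fin (n + 2) → Finset α}

theorem card_chainFamily_inter_sdiff (hA : ∀ i, A i ⊆ X \ Y) (hAcard : ∀ i, #(A i) = i)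
    {i : Fin (n + 2)} (hi : i ≠ Fin.last (n + 1)) :
    #(chainFamily f X Y A i ∩ (X \ Y)) = i := by
  have hmid : X ∩ (Y ∪ A i) ∩ (X \ Y) = A i ∧ (Y ∪ A i) ∩ (X \ Y) = A i := by
    constructor <;>
    · ext x; have := @hA i x; simp only [mem_union, mem_inter, mem_sdiff] at *; tauto
  unfold chainFamily
  split_ifs with h0
  · simp [h0, inter_sdiff_self]
  · rw [hmid.1, hAcard]
  · rw [hmid.2, hAcard]

theorem chainFamily_injective (hA : ∀ i, A i ⊆ X \ Y) (hAcard : ∀ i, #(A i) = i)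
    (hXY : n < #(X \ Y)) : Function.Injective (chainFamily f X Y A) := by
  have hlast : chainFamily f X Y A (Fin.last (n + 1)) ∩ (X \ Y) = X \ Y := by
    simp [chainFamily, Fin.last, Fin.ext_iff, inter_eq_right]
  intro i j hij
  have hlevel := congrArg (fun S => #(S ∩ (X \ Y))) hij
  by_cases hi : i = Fin.last (n + 1) <;> by_cases hj : j = Fin.last (n + 1)
  · rw [hi, hj]
  · rw [hi, hlast, card_chainFamily_inter_sdiff hA hAcard hj] at hlevel
    have := Fin.val_lt_last hj
    omega
  · rw [hj, hlast, card_chainFamily_inter_sdiff hA hAcard hi] at hlevel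
    have := Fin.val_lt_last hi
    omega
  · rw [card_chainFamily_inter_sdiff hA hAcard hi, card_chainFamily_inter_sdiff hA hAcard hj]
      at hlevel
    exact Fin.ext hlevel

theorem card_not_isSubmodularPair_chainFamily (hA : ∀ i, A i ⊆ X \ Y)
    (hbad : ¬IsSubmodularPair f X Y) :
    n + 1 ≤ #{ij : Fin (n + 2) × Fin (n + 2) | ij.1 < ij.2 ∧
      ¬IsSubmodularPair f (chainFamily f X Y A ij.1) (chainFamily f X Y A ij.2)} := by
  have hlast0 : Fin.last (n + 1) ≠ 0 := Fin.last_pos.ne'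
  -- every `r ≠ 0` is the non-zero coordinate of a violating pair: `(0, r)` or `(r, last)`
  let key : Fin (n + 2) × Fin (n + 2) → Fin (n + 2) := fun ij => if ij.1 = 0 then ij.2 else ij.1
  have hsurj : Set.SurjOn key ({ij : Fin (n + 2) × Fin (n + 2) | ij.1 < ij.2 ∧
      ¬IsSubmodularPair f (chainFamily f X Y A ij.1) (chainFamily f X Y A ij.2)} : Finset _)
      (univ.erase 0 : Finset (Fin (n + 2))) := by
    intro r hr
    simp only [coe_filter, mem_univ, true_and, coe_erase, coe_univ,
      Set.mem_sdiff_singleton] at hr ⊢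
    by_cases hrlast : r = Fin.last (n + 1)
    · refine ⟨(0, r), ⟨?_, ?_⟩, by simp [key]⟩
      · exact Fin.pos_iff_ne_zero.mpr hr.2
      · simpa [chainFamily, hrlast, hlast0, isSubmodularPair_comm] using hbad
    have hZ : Y ∪ A r ⊆ X ∪ Y :=
      union_subset subset_union_right ((hA r).trans (sdiff_subset.trans subset_union_left))
    by_cases hpair : IsSubmodularPair f X (Y ∪ A r)
    · refine ⟨(0, r), ⟨Fin.pos_iff_ne_zero.mpr hr.2, ?_⟩, by simp [key]⟩
      simp only [chainFamily, ↓reduceIte, if_neg hr.2, if_neg hrlast, if_pos hpair]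
      rw [isSubmodularPair_comm]
      exact fun h => hbad (hpair.of_intermediate subset_union_left hZ h)
    · refine ⟨(r, Fin.last (n + 1)), ⟨Fin.lt_last_iff_ne_last.mpr hrlast, ?_⟩, by simp [key, hr.2]⟩
      simp only [chainFamily, if_neg hr.2, if_neg hrlast, if_neg hlast0, if_neg hpair]
      rwa [isSubmodularPair_comm]
  simpa [card_erase_of_mem] using card_le_card_of_surjOn key hsurj

end chainFamily

theorem PQSubmodular.isSubmodularPair_of_lt_card_sdiff {n p : ℕ} (hf : PQSubmodular p (n + 2) f)
    (hp : (n + 1).choose 2 < p) {X Y : Finset α} (hXY : n < #(X \ Y)) :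
    IsSubmodularPair f X Y := by
  by_contra hbad
  choose A hA hAcard using fun i : Fin (n + 2) =>
    exists_subset_card_eq (s := X \ Y) (n := i) (by omega)
  have hcount := hf.add_card_not_isSubmodularPair_le (chainFamily_injective (f := f) hA hAcard hXY)
  have hviol := card_not_isSubmodularPair_chainFamily (f := f) hA hbad
  have hchoose : (n + 2).choose 2 = (n + 1).choose 2 + (n + 1) := by
    rw [Nat.choose_succ_succ', Nat.choose_one_right, add_comm]
  omega

end SubmodularPair

theorem stmt_5_general {α : Type*} [DecidableEq α] (p q : ℕ) (hq : 3 ≤ q)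
    (hp : (q - 1) * (q - 2) / 2 + 1 ≤ p)
    (f : Finset α → ℝ) (hf : PQSubmodular p q f) :
    DistantSubmodular (2 * q - 3) f := by
  obtain ⟨n, rfl⟩ : ∃ n, q = n + 2 := ⟨q - 2, by omega⟩
  have hp' : (n + 1).choose 2 < p := by
    rw [Nat.choose_two_right]
    simpa using hp
  intro X Y hXY
  rw [symmDiff_def, sup_eq_union, card_union_of_disjoint disjoint_sdiff_sdiff] at hXY
  rcases lt_or_ge n #(X \ Y) with hX | hY
  · exact hf.isSubmodularPair_of_lt_card_sdiff hp' hX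
  · exact isSubmodularPair_comm.mp (hf.isSubmodularPair_of_lt_card_sdiff hp' (by omega))

theorem stmt_5 {α : Type*} [DecidableEq α] (p q : ℕ) (hq : 3 ≤ q) (hp0 : 1 ≤ p)
    (hp : (q - 1) * (q - 2) / 2 + 1 ≤ p)
    (f : Finset α → ℝ) (hf : PQSubmodular p q f) :
    DistantSubmodular (2 * q - 3) f :=
  stmt_5_general p q hq hp f hf
end

section
/- Let S be a finite set, q ≥ 3 an integer, and p a positive integer with p ≤ (q−1)(q−2)/2. For any fixed T ⊆ S, the set function f_T : 2^S → ℤ defined by f_T(X) = −1 if X = T and f_T(X) = 0 otherwise is p/q-submodular. -/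
open scoped Classical

lemma card_lt_pairs {q : ℕ} (s : Finset (Fin q)) :
    ((s ×ˢ s).filter (fun p => p.1 < p.2)).card = s.card * (s.card - 1) / 2 := by
  have hbij : ((s ×ˢ s).filter (fun p => p.1 < p.2)).card
      = ((s ×ˢ s).filter (fun p => p.2 < p.1)).card := by
    apply Finset.card_nbij (fun p => (p.2, p.1))
    · intro p hp
      simp only [Finset.mem_coe, Finset.mem_filter, Finset.mem_product] at *
      tauto
    · intro p hp p' hp' h
      simpa [Prod.ext_iff, and_comm] using h
    · intro p hp
      simp only [Finset.coe_filter, Finset.mem_product, Set.mem_image, Set.mem_setOf_eq,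
        Finset.mem_coe] at *
      exact ⟨(p.2, p.1), ⟨⟨hp.1.2, hp.1.1⟩, hp.2⟩, rfl⟩
  have hsplit : s.offDiag = ((s ×ˢ s).filter (fun p => p.1 < p.2))
      ∪ ((s ×ˢ s).filter (fun p => p.2 < p.1)) := by
    ext pr
    simp only [Finset.mem_offDiag, Finset.mem_union, Finset.mem_filter, Finset.mem_product]
    constructor
    · rintro ⟨h1, h2, h3⟩
      rcases lt_or_gt_of_ne h3 with h | h
      · exact Or.inl ⟨⟨h1, h2⟩, h⟩
      · exact Or.inr ⟨⟨h1, h2⟩, h⟩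
    · rintro (⟨⟨h1, h2⟩, h⟩ | ⟨⟨h1, h2⟩, h⟩) <;> exact ⟨h1, h2, by omega⟩
  have hdisj : Disjoint ((s ×ˢ s).filter (fun p => p.1 < p.2))
      ((s ×ˢ s).filter (fun p => p.2 < p.1)) := by
    rw [Finset.disjoint_filter]
    intro x _ h1 h2
    exact absurd (h1.trans h2) (lt_irrefl _)
  have h := Finset.offDiag_card s
  rw [hsplit, Finset.card_union_of_disjoint hdisj, ← hbij] at h
  have h2 : s.card * (s.card - 1) = s.card * s.card - s.card := by
    rw [Nat.mul_sub, mul_one]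
  omega

/-- A set function `f` (with integer values) is `p/q`-submodular if for every `q` pairwise
distinct subsets there are at least `p` index pairs `(i, j)` with `i < j` satisfying the
submodular inequality. -/
def PQSubmodularInt {α : Type*} [DecidableEq α] (p q : ℕ) (f : Finset α → ℤ) : Prop :=
  ∀ T : Fin q → Finset α, Function.Injective T →
    p ≤ (Finset.univ.filter (fun ij : Fin q × Fin q =>
      ij.1 < ij.2 ∧ f (T ij.1 ∪ T ij.2) + f (T ij.1 ∩ T ij.2) ≤ f (T ij.1) + f (T ij.2))).card

theorem stmt_6 {α : Type*} [DecidableEq α] (p q : ℕ) (hq : 3 ≤ q) (hp0 : 1 ≤ p)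
    (hp : p ≤ (q - 1) * (q - 2) / 2) (T : Finset α) :
    PQSubmodularInt p q (fun X : Finset α => if X = T then (-1 : ℤ) else 0) := by
  intro Ts hinj
  set f : Finset α → ℤ := fun X => if X = T then (-1 : ℤ) else 0 with hf
  set A : Finset (Fin q) := Finset.univ.filter (fun i => ¬ Ts i = T) with hA
  have hAcard : q - 1 ≤ A.card := by
    have hcompl : (Finset.univ.filter (fun i => Ts i = T)).card ≤ 1 := by
      apply Finset.card_le_one.2
      intro a ha b hb
      simp only [Finset.mem_filter] at ha hb
      exact hinj (ha.2.trans hb.2.symm)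
    have hsum := Finset.card_filter_add_card_filter_not
      (s := (Finset.univ : Finset (Fin q))) (p := fun i => Ts i = T)
    simp only [Finset.card_univ, Fintype.card_fin] at hsum
    rw [hA]
    omega
  have hsub : (A ×ˢ A).filter (fun pr => pr.1 < pr.2) ⊆
      Finset.univ.filter (fun ij : Fin q × Fin q =>
        ij.1 < ij.2 ∧ f (Ts ij.1 ∪ Ts ij.2) + f (Ts ij.1 ∩ Ts ij.2) ≤ f (Ts ij.1) + f (Ts ij.2)) := by
    intro pr hpr
    simp only [Finset.mem_filter, Finset.mem_product, hA, Finset.mem_univ, true_and] at hpr ⊢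
    obtain ⟨⟨h1, h2⟩, hlt⟩ := hpr
    refine ⟨hlt, ?_⟩
    have e1 : f (Ts pr.1) = 0 := by simp [hf, h1]
    have e2 : f (Ts pr.2) = 0 := by simp [hf, h2]
    have e3 : f (Ts pr.1 ∪ Ts pr.2) ≤ 0 := by
      simp only [hf]; split <;> norm_num
    have e4 : f (Ts pr.1 ∩ Ts pr.2) ≤ 0 := by
      simp only [hf]; split <;> norm_num
    omega
  calc p ≤ (q - 1) * (q - 2) / 2 := hp
    _ ≤ A.card * (A.card - 1) / 2 := by
        apply Nat.div_le_div_right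
        apply Nat.mul_le_mul hAcard
        omega
    _ = ((A ×ˢ A).filter (fun pr => pr.1 < pr.2)).card := (card_lt_pairs A).symm
    _ ≤ _ := Finset.card_le_card hsub
end

section
/- Let G = (V, E) be a finite simple undirected graph and k a positive integer. Define f : 2^V → ℤ by: f(X) = −1 if the induced subgraph G[X] is a k-clique (i.e., |X| = k and every two vertices of X are adjacent); f(X) = 0 if |X| ≤ k and G[X] is not a k-clique; and f(X) = |V \ X| otherwise (i.e., if |X| > k). Then f is (2k+1)-distant submodular. -/
/-!
On sets of size at most `k` the function takes values in `{-1, 0}`; on larger sets it is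
`X ↦ |Xᶜ|`, which is modular. If `|X ∆ Y| ≥ 2k + 1`, then `X ∪ Y` and one of `X`, `Y`, say `X`,
have more than `k` elements. If `X ∩ Y` is large as well, so is `Y` and modularity gives equality.
Otherwise `f (X ∩ Y) ≤ 0`, and the loss of at most one in `f Y` is paid for by
`|(X ∪ Y)ᶜ| < |Xᶜ|` unless `Y ⊆ X`, in which case the inequality is an identity.
-/

open scoped symmDiff

/-- An integer-valued set function `f` is `k`-distant submodular if the submodular
inequality holds for every pair whose symmetric difference has size at least `k`. -/
def DistantSubmodularInt {α : Type*} [DecidableEq α] (k : ℕ) (f : Finset α → ℤ) : Prop :=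
  ∀ X Y : Finset α, k ≤ (X ∆ Y).card → f (X ∪ Y) + f (X ∩ Y) ≤ f X + f Y

namespace Finset

variable {α : Type*} [Fintype α] [DecidableEq α]

theorem card_compl_union_add_card_compl_inter (X Y : Finset α) :
    (X ∪ Y)ᶜ.card + (X ∩ Y)ᶜ.card = Xᶜ.card + Yᶜ.card := by
  rw [compl_union, compl_inter, card_inter_add_card_union]

theorem card_compl_union_lt_of_not_subset {X Y : Finset α} (h : ¬Y ⊆ X) :
    (X ∪ Y)ᶜ.card < Xᶜ.card :=
  card_lt_card <| compl_lt_compl_iff_lt.mpr <|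
    ssubset_of_subset_of_ne subset_union_left fun hX => h (hX ▸ subset_union_right)

end Finset

section Threshold

open Finset

variable {α : Type*} [Fintype α] [DecidableEq α] {k : ℕ} {f : Finset α → ℤ}

theorem submodular_ineq_of_card_compl_of_lt_card
    (hsmall : ∀ X : Finset α, X.card ≤ k → -1 ≤ f X ∧ f X ≤ 0)
    (hbig : ∀ X : Finset α, k < X.card → f X = Xᶜ.card)
    {X Y : Finset α} (hX : k < X.card) (hXY : k < (X ∪ Y).card) :
    f (X ∪ Y) + f (X ∩ Y) ≤ f X + f Y := by
  rw [hbig _ hXY, hbig X hX]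
  by_cases hI : k < (X ∩ Y).card
  · have hY : k < Y.card := hI.trans_le (card_le_card inter_subset_right)
    rw [hbig _ hI, hbig Y hY]
    exact_mod_cast (card_compl_union_add_card_compl_inter X Y).le
  have hfI : f (X ∩ Y) ≤ 0 := (hsmall _ (not_lt.mp hI)).2
  have hUX : (X ∪ Y)ᶜ.card ≤ Xᶜ.card := card_le_card (compl_subset_compl.mpr subset_union_left)
  by_cases hY : k < Y.card
  · rw [hbig Y hY]
    omega
  by_cases hYX : Y ⊆ X
  · rw [inter_eq_right.mpr hYX, union_eq_left.mpr hYX]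
  have := card_compl_union_lt_of_not_subset hYX
  have := (hsmall Y (not_lt.mp hY)).1
  omega

theorem distantSubmodularInt_of_card_compl
    (hsmall : ∀ X : Finset α, X.card ≤ k → -1 ≤ f X ∧ f X ≤ 0)
    (hbig : ∀ X : Finset α, k < X.card → f X = Xᶜ.card) :
    DistantSubmodularInt (2 * k + 1) f := by
  intro X Y hXY
  have hΔU : (X ∆ Y).card ≤ (X ∪ Y).card := card_le_card symmDiff_le_sup
  have hU : k < (X ∪ Y).card := by omega
  have hXorY : k < X.card ∨ k < Y.card := by
    have := card_union_le X Y
    omega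
  rcases hXorY with hX | hY
  · exact submodular_ineq_of_card_compl_of_lt_card hsmall hbig hX hU
  · have := submodular_ineq_of_card_compl_of_lt_card hsmall hbig hY (union_comm X Y ▸ hU)
    rwa [union_comm, inter_comm, add_comm (f Y)] at this

end Threshold

theorem stmt_8_general {V : Type*} [Fintype V] [DecidableEq V] (G : SimpleGraph V)
    (k : ℕ) (f : Finset V → ℤ)
    (hf_clique : ∀ X : Finset V, G.IsNClique k X → f X = -1)
    (hf_small : ∀ X : Finset V, ¬ G.IsNClique k X → X.card ≤ k → f X = 0)
    (hf_big : ∀ X : Finset V, k < X.card → f X = (Xᶜ.card : ℤ)) :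
    DistantSubmodularInt (2 * k + 1) f := by
  refine distantSubmodularInt_of_card_compl (fun X hX => ?_) hf_big
  by_cases hclique : G.IsNClique k X
  · simp [hf_clique X hclique]
  · simp [hf_small X hclique hX]

theorem stmt_8 {V : Type*} [Fintype V] [DecidableEq V] (G : SimpleGraph V)
    (k : ℕ) (hk : 1 ≤ k) (f : Finset V → ℤ)
    (hf_clique : ∀ X : Finset V, G.IsNClique k X → f X = -1)
    (hf_small : ∀ X : Finset V, ¬ G.IsNClique k X → X.card ≤ k → f X = 0)
    (hf_big : ∀ X : Finset V, k < X.card → f X = (Xᶜ.card : ℤ)) :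
    DistantSubmodularInt (2 * k + 1) f :=
  stmt_8_general G k f hf_clique hf_small hf_big
end
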